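/- Let f_1,…,f_N ∈ ℝ be a histogram for the knots x_0 < ⋯ < x_N and set h_i = x_i − x_{i-1}. Assume each q_i is Lipschitz continuous and let f be the bounded fractal function. Then f solves the histopolation problem, i.e. ∫_{x_{i-1}}^{x_i} f(x) dx = h_i f_i for every i = 1,…,N, if and only if ∫_{x_0}^{x_N} q_i(x) dx = (h_i f_i − α_i a_i ∑_{j=1}^N h_j f_j)/a_i for every i = 1,…,N. -/

import Mathlib

open Set

noncomputable def aC (x : ℕ → ℝ) (N i : ℕ) : ℝ := (x (i + 1) - x i) / (x N - x 0)

noncomputable def bC (x : ℕ → ℝ) (N i : ℕ) : ℝ := (x N * x i - x 0 * x (i + 1)) / (x N - x 0)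

/-- The affine map `L i t = a i * t + b i`. -/
noncomputable def Lm (x : ℕ → ℝ) (N i : ℕ) (t : ℝ) : ℝ := aC x N i * t + bC x N i

/-!
Substituting `t = L i s` in the functional equation gives
`∫_{x i}^{x (i+1)} f = a i * (α i * ∫_I f + ∫_I q i)`. Summing over `i`, with `∑ a i = 1`,
gives `(1 - ∑ α i a i) ∫_I f = ∑ a i ∫_I q i`, and `∑ α i a i < 1`; so the histopolation
conditions and the conditions on `∫_I q i` each force `∫_I f = ∑ h j c j`, after which they
are the same linear equations.

The integrals make sense because `f` is a fixed point of the Read–Bajraktarević operator `T`,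
a contraction in the sup norm on `I` that preserves measurability: `f` is the uniform limit on
`I` of the measurable iterates `T^[n] 0`.
-/

open MeasureTheory Filter Topology

section Contraction

variable {X E : Type*} [PseudoMetricSpace E] {s : Set X} {T : (X → E) → X → E} {r : ℝ}

lemma dist_iterate_le_of_contraction
    (hT : ∀ g h ε, (∀ y ∈ s, dist (g y) (h y) ≤ ε) → ∀ y ∈ s, dist (T g y) (T h y) ≤ r * ε)
    {f g₀ : X → E} (hf : ∀ y ∈ s, T f y = f y) {M : ℝ} (hM : ∀ y ∈ s, dist (f y) (g₀ y) ≤ M)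
    (n : ℕ) : ∀ y ∈ s, dist (f y) (T^[n] g₀ y) ≤ r ^ n * M := by
  induction n with
  | zero => simpa using hM
  | succ n ih =>
    intro y hy
    rw [Function.iterate_succ_apply', ← hf y hy, pow_succ', mul_assoc]
    exact hT _ _ _ ih y hy

theorem aemeasurable_restrict_of_contraction [MeasurableSpace X] [MeasurableSpace E]
    [BorelSpace E] (μ : Measure X) (hs : MeasurableSet s)
    (hTm : ∀ g, Measurable g → Measurable (T g)) (hr₀ : 0 ≤ r) (hr₁ : r < 1)
    (hT : ∀ g h ε, (∀ y ∈ s, dist (g y) (h y) ≤ ε) → ∀ y ∈ s, dist (T g y) (T h y) ≤ r * ε)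
    {f g₀ : X → E} (hg₀ : Measurable g₀) (hf : ∀ y ∈ s, T f y = f y) {M : ℝ}
    (hM : ∀ y ∈ s, dist (f y) (g₀ y) ≤ M) : AEMeasurable f (μ.restrict s) := by
  have hmeas : ∀ n, Measurable (T^[n] g₀) := fun n => by
    induction n with
    | zero => exact hg₀
    | succ n ih => rw [Function.iterate_succ']; exact hTm _ ih
  have hlim : Tendsto (fun n => r ^ n * M) atTop (𝓝 0) := by
    simpa using (tendsto_pow_atTop_nhds_zero_of_lt_one hr₀ hr₁).mul_const M
  refine aemeasurable_of_tendsto_metrizable_ae' (fun n => (hmeas n).aemeasurable) ?_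
  filter_upwards [ae_restrict_mem hs] with y hy
  rw [tendsto_iff_dist_tendsto_zero]
  refine squeeze_zero (fun _ => dist_nonneg) (fun n => ?_) hlim
  rw [dist_comm]
  exact dist_iterate_le_of_contraction hT hf hM n y hy

end Contraction

section Knots

variable {x : ℕ → ℝ} {N i : ℕ} {y : ℝ}

noncomputable def LmInv (x : ℕ → ℝ) (N i : ℕ) (y : ℝ) : ℝ := (y - bC x N i) / aC x N i

lemma aC_pos (h0N : x 0 < x N) (hi : x i < x (i + 1)) : 0 < aC x N i :=
  div_pos (sub_pos.2 hi) (sub_pos.2 h0N)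

lemma sum_aC (h0N : x 0 ≠ x N) : ∑ i ∈ Finset.range N, aC x N i = 1 := by
  simp only [aC]
  rw [← Finset.sum_div, Finset.sum_range_sub, div_self (sub_ne_zero.2 h0N.symm)]

lemma Lm_left (h0N : x 0 ≠ x N) : Lm x N i (x 0) = x i := by
  have := sub_ne_zero.2 h0N.symm
  simp only [Lm, aC, bC]; field_simp; ring

lemma Lm_right (h0N : x 0 ≠ x N) : Lm x N i (x N) = x (i + 1) := by
  have := sub_ne_zero.2 h0N.symm
  simp only [Lm, aC, bC]; field_simp; ring

lemma Lm_LmInv (ha : aC x N i ≠ 0) : Lm x N i (LmInv x N i y) = y := by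
  simp only [Lm, LmInv]; field_simp; ring

lemma strictMono_Lm (h0N : x 0 < x N) (hi : x i < x (i + 1)) : StrictMono (Lm x N i) :=
  fun _ _ h => by simp only [Lm]; gcongr; exact aC_pos h0N hi

lemma LmInv_mem_Ico (h0N : x 0 < x N) (hy : y ∈ Ico (x i) (x (i + 1))) :
    LmInv x N i y ∈ Ico (x 0) (x N) := by
  have hi : x i < x (i + 1) := hy.1.trans_lt hy.2
  have hL := strictMono_Lm h0N hi
  constructor
  · rw [← hL.le_iff_le, Lm_left h0N.ne, Lm_LmInv (aC_pos h0N hi).ne']; exact hy.1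
  · rw [← hL.lt_iff_lt, Lm_right h0N.ne, Lm_LmInv (aC_pos h0N hi).ne']; exact hy.2

lemma exists_mem_Ico_knots (hy : y ∈ Ico (x 0) (x N)) : ∃ i < N, y ∈ Ico (x i) (x (i + 1)) := by
  simpa only [mem_iUnion, Finset.mem_range, exists_prop] using Ico_subset_biUnion_Ico N x hy

lemma disjoint_Ico_knots (hx : StrictMonoOn x (Iic N)) {j : ℕ} (hi : i < N) (hj : j < N)
    (hij : i ≠ j) : Disjoint (Ico (x i) (x (i + 1))) (Ico (x j) (x (j + 1))) := by
  have hle : ∀ {k l}, k < l → l < N → x (k + 1) ≤ x l := fun hkl hl =>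
    hx.monotoneOn (mem_Iic.2 (by omega)) (mem_Iic.2 hl.le) hkl
  rw [Set.disjoint_left]
  rintro y ⟨hy₁, hy₂⟩ ⟨hy₃, hy₄⟩
  rcases hij.lt_or_gt with h | h
  · linarith [hle h hj]
  · linarith [hle h hi]

lemma mem_Icc_knots (hx : StrictMonoOn x (Iic N)) (hi : i ≤ N) : x i ∈ Icc (x 0) (x N) :=
  ⟨hx.monotoneOn (mem_Iic.2 (Nat.zero_le N)) (mem_Iic.2 hi) (Nat.zero_le i),
    hx.monotoneOn (mem_Iic.2 hi) (mem_Iic.2 le_rfl) hi⟩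

end Knots

section Operator

variable {x : ℕ → ℝ} {N i : ℕ} {α : ℕ → ℝ} {q : ℕ → ℝ → ℝ} {y : ℝ}

/-- The operator `T` of the construction, with every piece half-open (so `T g (x N) = 0`): the
fixed-point property is only needed on `[x 0, x N)`, and a point does not affect integrals. -/
noncomputable def fractalOperator (x : ℕ → ℝ) (N : ℕ) (α : ℕ → ℝ) (q : ℕ → ℝ → ℝ)
    (g : ℝ → ℝ) (y : ℝ) : ℝ :=
  ∑ i ∈ Finset.range N, (Ico (x i) (x (i + 1))).indicator
    (fun y => α i * g (LmInv x N i y) + q i (LmInv x N i y)) y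

lemma fractalOperator_apply (hx : StrictMonoOn x (Iic N)) (hi : i < N)
    (hy : y ∈ Ico (x i) (x (i + 1))) (g : ℝ → ℝ) :
    fractalOperator x N α q g y = α i * g (LmInv x N i y) + q i (LmInv x N i y) := by
  rw [fractalOperator, Finset.sum_eq_single_of_mem i (Finset.mem_range.2 hi), indicator_of_mem hy]
  intro j hj hji
  exact indicator_of_notMem
    (Set.disjoint_left.1 (disjoint_Ico_knots hx hi (Finset.mem_range.1 hj) hji.symm) hy) _

lemma measurable_fractalOperator (hq : ∀ i < N, Measurable (q i)) {g : ℝ → ℝ}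
    (hg : Measurable g) : Measurable (fractalOperator x N α q g) := by
  refine Finset.measurable_sum _ fun i hi => Measurable.indicator ?_ measurableSet_Ico
  have hinv : Measurable (LmInv x N i) := (measurable_id.sub_const _).div_const _
  exact (measurable_const.mul (hg.comp hinv)).add ((hq i (Finset.mem_range.1 hi)).comp hinv)

lemma dist_fractalOperator_le (hx : StrictMonoOn x (Iic N)) {r : ℝ}
    (hα : ∀ i < N, |α i| ≤ r) {g h : ℝ → ℝ} {ε : ℝ}
    (hgh : ∀ y ∈ Ico (x 0) (x N), dist (g y) (h y) ≤ ε) :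
    ∀ y ∈ Ico (x 0) (x N),
      dist (fractalOperator x N α q g y) (fractalOperator x N α q h y) ≤ r * ε := by
  intro y hy
  obtain ⟨i, hi, hyi⟩ := exists_mem_Ico_knots hy
  have hz := LmInv_mem_Ico (hy.1.trans_lt hy.2) hyi
  rw [fractalOperator_apply hx hi hyi, fractalOperator_apply hx hi hyi, dist_add_right,
    Real.dist_eq, ← mul_sub, abs_mul, ← Real.dist_eq]
  exact mul_le_mul (hα i hi) (hgh _ hz) dist_nonneg ((abs_nonneg _).trans (hα i hi))

lemma fractalOperator_eq_self (hx : StrictMonoOn x (Iic N)) {f : ℝ → ℝ}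
    (hfe : ∀ i < N, ∀ t ∈ Ico (x 0) (x N), f (Lm x N i t) = α i * f t + q i t) :
    ∀ y ∈ Ico (x 0) (x N), fractalOperator x N α q f y = f y := by
  intro y hy
  obtain ⟨i, hi, hyi⟩ := exists_mem_Ico_knots hy
  have h0N : x 0 < x N := hy.1.trans_lt hy.2
  rw [fractalOperator_apply hx hi hyi, ← hfe i hi _ (LmInv_mem_Ico h0N hyi),
    Lm_LmInv (aC_pos h0N (hyi.1.trans_lt hyi.2)).ne']

end Operator

section Integral

variable {x : ℕ → ℝ} {N i : ℕ} {f : ℝ → ℝ}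

theorem integrableOn_of_fractalEquation (hx : StrictMonoOn x (Iic N)) {α : ℕ → ℝ}
    (hα : ∀ i < N, |α i| < 1) {q : ℕ → ℝ → ℝ}
    (hq : ∀ i < N, ContinuousOn (q i) (Icc (x 0) (x N)))
    (hfb : ∃ M, ∀ t ∈ Icc (x 0) (x N), |f t| ≤ M)
    (hfe : ∀ i < N, ∀ t ∈ Ico (x 0) (x N), f (Lm x N i t) = α i * f t + q i t) :
    IntegrableOn f (Icc (x 0) (x N)) := by
  obtain ⟨M, hM⟩ := hfb
  have h0N : x 0 ≤ x N := (mem_Icc_knots hx (le_refl N)).1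
  -- extend each `q i` continuously off `I` so that the operator preserves measurability
  set q' : ℕ → ℝ → ℝ := fun i t => q i (projIcc (x 0) (x N) h0N t)
  have hq' : ∀ i < N, Measurable (q' i) := fun i hi =>
    ((hq i hi).comp_continuous (continuous_subtype_val.comp continuous_projIcc)
      fun t => (projIcc (x 0) (x N) h0N t).2).measurable
  have hfe' : ∀ i < N, ∀ t ∈ Ico (x 0) (x N), f (Lm x N i t) = α i * f t + q' i t := by
    intro i hi t ht
    simp only [q', projIcc_of_mem h0N (Ico_subset_Icc_self ht)]
    exact hfe i hi t ht
  set r : NNReal := (Finset.range N).sup fun i => ‖α i‖₊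
  have hr₁ : (r : ℝ) < 1 := NNReal.coe_lt_one.2 <| (Finset.sup_lt_iff zero_lt_one).2 fun i hi => by
    simpa [← NNReal.coe_lt_one] using hα i (Finset.mem_range.1 hi)
  have hαr : ∀ i < N, |α i| ≤ r := fun i hi => by
    simpa using NNReal.coe_le_coe.2
      (Finset.le_sup (f := fun i => ‖α i‖₊) (Finset.mem_range.2 hi))
  have hfm : AEMeasurable f (volume.restrict (Ico (x 0) (x N))) :=
    aemeasurable_restrict_of_contraction volume measurableSet_Ico
      (fun _ => measurable_fractalOperator hq') r.2 hr₁
      (fun _ _ _ => dist_fractalOperator_le hx hαr)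
      measurable_const (fractalOperator_eq_self hx hfe') (g₀ := 0) (M := M)
      fun t ht => by simpa using hM t (Ico_subset_Icc_self ht)
  refine (integrableOn_Icc_iff_integrableOn_Ico).2 <|
    IntegrableOn.of_bound measure_Ico_lt_top hfm.aestronglyMeasurable M ?_
  exact ae_restrict_of_forall_mem measurableSet_Ico fun t ht => hM t (Ico_subset_Icc_self ht)

lemma integral_Lm_image (h0N : x 0 < x N) (hi : x i < x (i + 1)) {a : ℝ} {q : ℝ → ℝ}
    (hf : IntervalIntegrable f volume (x 0) (x N)) (hq : IntervalIntegrable q volume (x 0) (x N))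
    (hfe : ∀ t ∈ Ico (x 0) (x N), f (Lm x N i t) = a * f t + q t) :
    ∫ t in x i..x (i + 1), f t =
      aC x N i * (a * (∫ t in x 0..x N, f t) + ∫ t in x 0..x N, q t) := by
  have ha := aC_pos h0N hi
  calc ∫ t in x i..x (i + 1), f t = ∫ t in Lm x N i (x 0)..Lm x N i (x N), f t := by
        rw [Lm_left h0N.ne, Lm_right h0N.ne]
    _ = aC x N i * ∫ t in x 0..x N, f (Lm x N i t) := by
        simp only [Lm]
        rw [intervalIntegral.integral_comp_mul_add f ha.ne', smul_eq_mul,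
          mul_inv_cancel_left₀ ha.ne']
    _ = aC x N i * ∫ t in x 0..x N, (a * f t + q t) := by
        rw [intervalIntegral.integral_congr_Ioo_of_le h0N.le
          fun t ht => hfe t (Ioo_subset_Ico_self ht)]
    _ = _ := by
        rw [intervalIntegral.integral_add (hf.const_mul a) hq, intervalIntegral.integral_const_mul]

end Integral

lemma sum_mul_lt_one {ι : Type*} {s : Finset ι} (hs : s.Nonempty) {a α : ι → ℝ}
    (ha : ∀ i ∈ s, 0 < a i) (hsum : ∑ i ∈ s, a i = 1) (hα : ∀ i ∈ s, |α i| < 1) :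
    ∑ i ∈ s, α i * a i < 1 := by
  rw [← hsum]
  refine Finset.sum_lt_sum_of_nonempty hs fun i hi => ?_
  nlinarith [ha i hi, hα i hi, le_abs_self (α i)]

lemma forall_eq_iff_of_self_affine {ι : Type*} {s : Finset ι} {a α Q J h : ι → ℝ} {F : ℝ}
    (ha : ∀ i ∈ s, a i ≠ 0) (hJ : ∀ i ∈ s, J i = a i * (α i * F + Q i))
    (hF : ∑ i ∈ s, J i = F) (hA : ∑ i ∈ s, α i * a i ≠ 1) :
    (∀ i ∈ s, J i = h i) ↔ ∀ i ∈ s, Q i = (h i - α i * a i * ∑ j ∈ s, h j) / a i := by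
  constructor
  · intro H i hi
    have hFS : F = ∑ j ∈ s, h j := hF ▸ Finset.sum_congr rfl H
    rw [eq_div_iff (ha i hi), ← hFS, ← H i hi, hJ i hi]
    ring
  · intro H
    set S := ∑ j ∈ s, h j
    have hJ' : ∀ i ∈ s, J i = h i + α i * a i * (F - S) := fun i hi => by
      rw [hJ i hi, H i hi]; field_simp [ha i hi]; ring
    have hFS : (1 - ∑ i ∈ s, α i * a i) * (F - S) = 0 := by
      have := Finset.sum_congr rfl hJ'
      rw [hF, Finset.sum_add_distrib, ← Finset.sum_mul] at this
      linear_combination this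
    have hFS' : F = S := by
      rcases mul_eq_zero.1 hFS with h1 | h2
      · exact absurd (sub_eq_zero.1 h1).symm hA
      · exact sub_eq_zero.1 h2
    intro i hi
    rw [hJ' i hi, hFS', sub_self, mul_zero, add_zero]

theorem stmt18_general
    (N : ℕ)
    (x : ℕ → ℝ)
    (hx : ∀ i, i < N → x i < x (i + 1))
    (α : ℕ → ℝ) (hα : ∀ i, i < N → |α i| < 1)
    (q : ℕ → ℝ → ℝ)
    (hq : ∀ i, i < N → ∃ C, ∀ u ∈ Icc (x 0) (x N), ∀ v ∈ Icc (x 0) (x N),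
      |q i u - q i v| ≤ C * |u - v|)
    (f : ℝ → ℝ)
    (hfb : ∃ M, ∀ t ∈ Icc (x 0) (x N), |f t| ≤ M)
    (hfe : ∀ i, i < N → ∀ t ∈ Ico (x 0) (x N), f (Lm x N i t) = α i * f t + q i t)
    (c : ℕ → ℝ) :
    (∀ i, i < N → ∫ t in (x i)..(x (i + 1)), f t = (x (i + 1) - x i) * c i) ↔
    (∀ i, i < N → ∫ t in (x 0)..(x N), q i t =
      ((x (i + 1) - x i) * c i -
        α i * aC x N i * ∑ j ∈ Finset.range N, (x (j + 1) - x j) * c j) / aC x N i) := by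
  rcases N.eq_zero_or_pos with rfl | hN
  · simp
  have hxm : StrictMonoOn x (Iic N) :=
    strictMonoOn_Iic_of_lt_succ fun m hm => by simpa using hx m hm
  have h0N : x 0 < x N := hxm (mem_Iic.2 (Nat.zero_le N)) (mem_Iic.2 le_rfl) hN
  have hqc : ∀ i < N, ContinuousOn (q i) (Icc (x 0) (x N)) := fun i hi => by
    obtain ⟨C, hC⟩ := hq i hi
    exact (LipschitzOnWith.of_dist_le' fun u hu v hv => by
      simpa only [Real.dist_eq] using hC u hu v hv).continuousOn
  have hfi : ∀ {i j}, i ≤ N → j ≤ N → IntervalIntegrable f volume (x i) (x j) := fun hi hj =>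
    ((integrableOn_of_fractalEquation hxm hα hqc hfb hfe).mono_set
      (uIcc_subset_Icc (mem_Icc_knots hxm hi) (mem_Icc_knots hxm hj))).intervalIntegrable
  have hpiece : ∀ i ∈ Finset.range N, ∫ t in x i..x (i + 1), f t =
      aC x N i * (α i * (∫ t in x 0..x N, f t) + ∫ t in x 0..x N, q i t) := fun i hi =>
    have hi := Finset.mem_range.1 hi
    integral_Lm_image h0N (hx i hi) (hfi (Nat.zero_le N) le_rfl)
      ((hqc i hi).intervalIntegrable_of_Icc h0N.le) (hfe i hi)
  have hsum := intervalIntegral.sum_integral_adjacent_intervals fun i hi => hfi hi.le hi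
  have hA := sum_mul_lt_one (s := Finset.range N) ⟨0, Finset.mem_range.2 hN⟩
    (fun i hi => aC_pos h0N (hx i (Finset.mem_range.1 hi))) (sum_aC h0N.ne)
    fun i hi => hα i (Finset.mem_range.1 hi)
  simpa only [Finset.mem_range] using forall_eq_iff_of_self_affine
    (fun i hi => (aC_pos h0N (hx i (Finset.mem_range.1 hi))).ne') hpiece hsum hA.ne

/-- The bounded fractal function `f` solves the histopolation problem
`∫_{x i}^{x (i+1)} f = h i * c i` if and only if
`∫_I q i = (h i c i - α i a i ∑ j h j c j) / a i` for every `i`. -/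
theorem stmt18
    (N : ℕ) (hN : 2 ≤ N)
    (x : ℕ → ℝ)
    (hx : ∀ i, i < N → x i < x (i + 1))
    (α : ℕ → ℝ) (hα : ∀ i, i < N → |α i| < 1)
    (q : ℕ → ℝ → ℝ)
    (hq : ∀ i, i < N → ∃ C, ∀ u ∈ Icc (x 0) (x N), ∀ v ∈ Icc (x 0) (x N),
      |q i u - q i v| ≤ C * |u - v|)
    (f : ℝ → ℝ)
    (hfb : ∃ M, ∀ t ∈ Icc (x 0) (x N), |f t| ≤ M)
    (hfe : ∀ i, i < N → ∀ t ∈ Ico (x 0) (x N), f (Lm x N i t) = α i * f t + q i t)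
    (hfeN : f (Lm x N (N - 1) (x N)) = α (N - 1) * f (x N) + q (N - 1) (x N))
    (c : ℕ → ℝ) :
    (∀ i, i < N → ∫ t in (x i)..(x (i + 1)), f t = (x (i + 1) - x i) * c i) ↔
    (∀ i, i < N → ∫ t in (x 0)..(x N), q i t =
      ((x (i + 1) - x i) * c i -
        α i * aC x N i * ∑ j ∈ Finset.range N, (x (j + 1) - x j) * c j) / aC x N i) :=
  stmt18_general N x hx α hα q hq f hfb hfe c
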